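/- Let R ⊆ ℤ^d be finite and for each ℓ let B_ℓ(R) be the union of all ℓ-cubes containing at least half their points in R. Then there exist constants b₁(d), b₂(d) such that |∂B_ℓ(R)| ≤ b₁|∂R| and |B_ℓ(R) Δ B_{ℓ+1}(R)| ≤ b₂ 2^ℓ |∂R| for every ℓ ≥ 0. -/

import Mathlib

/-!
The key estimate is a weak isoperimetric inequality in a box `Q` of side `N`:
`|Q ∩ R| · |Q \ R| ≤ d N^(d+1) |Q ∩ ∂R|`. Walking from `x ∈ R` to `y ∉ R` one coordinate at a
time crosses `∂R` inside `Q`, and the pair `(x, y)` can be recovered from the crossing point and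
`d + 1` further coordinates.

Call a cell `s` mixed if the `3^d` cubes of scale `ℓ` around `s` contain at least half a cube of
`R` and half a cube of its complement. Applied to that block, the inequality gives
`2^(ℓd) ≤ C 2^ℓ |∂R ∩ block|`; since every point lies in at most `3^d` blocks, the number of mixed
cells is at most `C' 2^ℓ |∂R| / 2^(ℓd)`. Both bounds follow from this count. A point of
`∂B_ℓ(R)` lies on the boundary layer (at most `2d 2^(ℓ(d-1))` points) of a non-full cube adjacent
to a full one, which is mixed. A point of `B_ℓ(R) Δ B_(ℓ+1)(R)` lies in an `ℓ`-cube whose fullness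
differs from that of its parent, which is mixed as well.
-/

/-- Points of the lattice `ℤ^d`. -/
abbrev Pt (d : ℕ) := Fin d → ℤ

/-- Two lattice points are adjacent if they are distinct and at `L^∞`-distance at most 1
(i.e. exactly 1). -/
def adj {d : ℕ} (s t : Pt d) : Prop := s ≠ t ∧ ∀ i, |s i - t i| ≤ 1

/-- A set `R ⊆ ℤ^d` is connected if any two of its points are joined by a path inside `R`
whose consecutive points are at `L^∞`-distance 1. -/
def connectedIn {d : ℕ} (R : Set (Pt d)) : Prop :=
  ∀ s ∈ R, ∀ t ∈ R, Relation.ReflTransGen (fun a b => a ∈ R ∧ b ∈ R ∧ adj a b) s t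

/-- The external boundary `∂R = {s ∉ R : dist_∞(s, R) = 1}`. -/
def extBoundary {d : ℕ} (R : Set (Pt d)) : Set (Pt d) :=
  {s | s ∉ R ∧ ∃ t ∈ R, adj s t}

/-- The interior `Int R`: the union of the finite connected components of the complement. -/
def latticeInt {d : ℕ} (R : Set (Pt d)) : Set (Pt d) :=
  {s | s ∉ R ∧
    Set.Finite {t | Relation.ReflTransGen (fun a b => a ∉ R ∧ b ∉ R ∧ adj a b) s t}}

/-- The `ℓ`-cube based at `2^ℓ s`: `(∏_i [2^ℓ s_i, 2^ℓ (s_i+1))) ∩ ℤ^d`. -/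
def cube {d : ℕ} (ℓ : ℕ) (s : Pt d) : Set (Pt d) :=
  {t | ∀ i, 2 ^ ℓ * s i ≤ t i ∧ t i < 2 ^ ℓ * (s i + 1)}

/-- The coarse-grained region `B_ℓ(R)`: the union of all `ℓ`-cubes containing at least half
of their `2^{ℓ d}` points in `R`. -/
def coarse {d : ℕ} (ℓ : ℕ) (R : Set (Pt d)) : Set (Pt d) :=
  ⋃ s ∈ {s : Pt d | 2 ^ (ℓ * d) ≤ 2 * (cube ℓ s ∩ R).ncard}, cube ℓ s

open Function

theorem Int.exists_ne_add_one_of_ne {α : Type*} (f : ℤ → α) {a b : ℤ} (h : f a ≠ f b) :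
    ∃ z, min a b ≤ z ∧ z < max a b ∧ f z ≠ f (z + 1) := by
  suffices key : ∀ {a b}, a ≤ b → f a ≠ f b → ∃ z, a ≤ z ∧ z < b ∧ f z ≠ f (z + 1) by
    rcases le_total a b with hab | hba
    · simpa [hab] using key hab h
    · simpa [hba] using key hba h.symm
  intro a b hab h
  induction b, hab using Int.leInduction with
  | base => exact absurd rfl h
  | succ b hab ih =>
    by_cases hb : f a = f b
    · exact ⟨b, hab, by omega, hb ▸ h⟩
    · obtain ⟨z, hz, hzb, hne⟩ := ih hb
      exact ⟨z, hz, by omega, hne⟩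

theorem Int.abs_ediv_sub_ediv_le_one {L a b : ℤ} (hL : 0 < L) (h : |a - b| ≤ 1) :
    |a / L - b / L| ≤ 1 := by
  have := Int.ediv_mul_le a hL.ne'
  have := Int.ediv_mul_le b hL.ne'
  have := Int.lt_ediv_add_one_mul_self a hL
  have := Int.lt_ediv_add_one_mul_self b hL
  rw [abs_le] at h ⊢
  constructor <;> by_contra! <;> nlinarith

theorem Int.eq_mul_ediv_or_eq_mul_ediv_add_sub_one_of_ediv_ne {L a b : ℤ} (hL : 0 < L)
    (h : |a - b| ≤ 1) (hne : a / L ≠ b / L) :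
    a = L * (a / L) ∨ a = L * (a / L) + (L - 1) := by
  have := Int.ediv_mul_le a hL.ne'
  have := Int.ediv_mul_le b hL.ne'
  have := Int.lt_ediv_add_one_mul_self a hL
  have := Int.lt_ediv_add_one_mul_self b hL
  rw [abs_le] at h
  rcases lt_or_gt_of_ne hne with hlt | hgt
  · right; nlinarith
  · left; nlinarith

theorem sum_ncard_inter_le_mul_ncard {ι α : Type*} {A : Set α} (hA : A.Finite) (S : Finset ι)
    (F : ι → Set α) [∀ a, DecidablePred fun i => a ∈ F i] {M : ℕ}
    (hM : ∀ a ∈ A, (S.filter fun i => a ∈ F i).card ≤ M) :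
    ∑ i ∈ S, (F i ∩ A).ncard ≤ M * A.ncard := by
  obtain ⟨A, rfl⟩ := hA.exists_finset_coe
  have hcard (i : ι) : (F i ∩ A).ncard = (A.bipartiteAbove (fun i a => a ∈ F i) i).card := by
    rw [← Set.ncard_coe_finset, Finset.coe_bipartiteAbove]
    congr 1
    ext
    simp [and_comm]
  simp only [hcard, Finset.sum_card_bipartiteAbove_eq_sum_card_bipartiteBelow,
    Set.ncard_coe_finset]
  exact (Finset.sum_le_card_nsmul _ _ _ hM).trans_eq (by simp [mul_comm])

variable {d : ℕ}

theorem adj_comm {s t : Pt d} : adj s t ↔ adj t s :=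
  ⟨fun h => ⟨h.1.symm, fun i => abs_sub_comm (s i) (t i) ▸ h.2 i⟩,
    fun h => ⟨h.1.symm, fun i => abs_sub_comm (t i) (s i) ▸ h.2 i⟩⟩

theorem adj_update_add_one (p : Pt d) (i : Fin d) (z : ℤ) :
    adj (update p i z) (update p i (z + 1)) := by
  refine ⟨fun h => by simpa using congrFun h i, fun j => ?_⟩
  rcases eq_or_ne j i with rfl | hj
  · simp
  · simp [hj]

theorem mem_Icc_sub_one_add_one_of_adj {s t : Pt d} (h : adj s t) : s ∈ Set.Icc (t - 1) (t + 1) :=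
  ⟨fun i => by
      have := abs_le.1 (h.2 i)
      simp only [Pi.sub_apply, Pi.one_apply]
      omega,
    fun i => by
      have := abs_le.1 (h.2 i)
      simp only [Pi.add_apply, Pi.one_apply]
      omega⟩

theorem extBoundary_finite {R : Set (Pt d)} (hR : R.Finite) : (extBoundary R).Finite :=
  (hR.biUnion fun t _ => Set.finite_Icc (t - 1) (t + 1)).subset
    fun _ ⟨_, _, ht, hadj⟩ => Set.mem_biUnion ht (mem_Icc_sub_one_add_one_of_adj hadj)

theorem exists_update_mem_extBoundary {R : Set (Pt d)} (p : Pt d) (i : Fin d) {u v : ℤ}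
    (h : (update p i u ∈ R) ≠ (update p i v ∈ R)) :
    ∃ w ∈ Set.uIcc u v, update p i w ∈ extBoundary R := by
  obtain ⟨z, hlo, hhi, hz⟩ := Int.exists_ne_add_one_of_ne (fun w => update p i w ∈ R) h
  have hz' : z ∈ Set.uIcc u v := ⟨hlo, hhi.le⟩
  have hz1 : z + 1 ∈ Set.uIcc u v := ⟨by omega, by omega⟩
  by_cases hzR : update p i z ∈ R
  · have : update p i (z + 1) ∉ R := fun h' => hz (propext (iff_of_true hzR h'))
    exact ⟨z + 1, hz1, this, _, hzR, adj_comm.1 (adj_update_add_one p i z)⟩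
  · have : update p i (z + 1) ∈ R := by
      by_contra h'
      exact hz (propext (iff_of_false hzR h'))
    exact ⟨z, hz', hzR, _, this, adj_update_add_one p i z⟩

theorem exists_mem_extBoundary_uIcc {R : Set (Pt d)} {x y : Pt d} (hx : x ∈ R) (hy : y ∉ R) :
    ∃ i : Fin d, ∃ b ∈ extBoundary R, b ∈ Set.uIcc x y ∧
      (∀ j < i, b j = y j) ∧ ∀ j, i < j → b j = x j := by
  let walk : ℤ → Pt d := fun k j => if (j : ℤ) < k then y j else x j
  have hwalk : (walk 0 ∈ R) ≠ (walk d ∈ R) := by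
    have h0 : walk 0 = x := funext fun j => if_neg (by omega)
    have hd : walk d = y := funext fun j => if_pos (by omega)
    rw [h0, hd]
    exact fun h => hy (h ▸ hx)
  obtain ⟨z, hz0, hzd, hz⟩ := Int.exists_ne_add_one_of_ne (fun k => walk k ∈ R) hwalk
  let i : Fin d := ⟨z.toNat, by omega⟩
  have hlt (j : Fin d) : (j : ℤ) < z ↔ j < i := by
    rw [Fin.lt_def]
    show _ ↔ (j : ℕ) < z.toNat
    omega
  have hle (j : Fin d) : (j : ℤ) < z + 1 ↔ j ≤ i := by
    rw [Fin.le_def]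
    show _ ↔ (j : ℕ) ≤ z.toNat
    omega
  have hwalk_z : walk z = update (walk z) i (x i) :=
    (update_eq_self_iff.2 (if_neg ((hlt i).not.2 (lt_irrefl i))).symm).symm
  have hwalk_succ : walk (z + 1) = update (walk z) i (y i) := by
    funext j
    rcases eq_or_ne j i with rfl | hj
    · simp [walk, hle]
    · simp only [walk, update_of_ne hj, hlt, hle, le_iff_lt_or_eq, hj, or_false]
  rw [hwalk_z, hwalk_succ] at hz
  obtain ⟨w, hw, hb⟩ := exists_update_mem_extBoundary (walk z) i hz
  refine ⟨i, _, hb, ?_, fun j hj => ?_, fun j hj => ?_⟩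
  · rw [← Set.pi_univ_uIcc]
    intro j _
    rcases eq_or_ne j i with rfl | hj
    · simpa using hw
    · simp only [update_of_ne hj, walk]
      split_ifs
      exacts [Set.right_mem_uIcc, Set.left_mem_uIcc]
  · simp [update_of_ne hj.ne, walk, (hlt j).2 hj]
  · simp [update_of_ne hj.ne', walk, (hlt j).not.2 (not_lt.2 hj.le)]

theorem ncard_Icc_eq_prod (a b : Pt d) : (Set.Icc a b).ncard = ∏ i, (b i + 1 - a i).toNat := by
  rw [← Finset.coe_Icc, Set.ncard_coe_finset, Pi.card_Icc]
  simp [Int.card_Icc]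

theorem ncard_Icc_le_pow {a b : Pt d} {N : ℕ} (hN : ∀ i, b i < a i + N) :
    (Set.Icc a b).ncard ≤ N ^ d := by
  rw [ncard_Icc_eq_prod]
  refine (Finset.prod_le_pow_card _ _ N fun i _ => ?_).trans_eq (by simp)
  have := hN i
  omega

/-- A pair `(x, y)` with `x ∈ R`, `y ∉ R` is recovered from the crossing point `b` given by
`exists_mem_extBoundary_uIcc`, the crossing coordinate `i`, the point `w` made of the coordinates
of `x` and `y` that `b` forgets, and `x i`. -/
theorem ncard_inter_mul_ncard_inter_compl_le (R : Set (Pt d)) {a c : Pt d} {N : ℕ}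
    (hN : ∀ i, c i < a i + N) :
    (Set.Icc a c ∩ R).ncard * (Set.Icc a c ∩ Rᶜ).ncard ≤
      d * N ^ (d + 1) * (Set.Icc a c ∩ extBoundary R).ncard := by
  set Q := Set.Icc a c
  let decode : Pt d × Fin d × Pt d × ℕ → Pt d × Pt d := fun ⟨b, i, w, k⟩ =>
    (fun j => if j < i then w j else if j = i then a i + k else b j,
      fun j => if j < i then b j else w j)
  have hcover : (Q ∩ R) ×ˢ (Q ∩ Rᶜ) ⊆
      decode '' ((Q ∩ extBoundary R) ×ˢ Set.univ ×ˢ Q ×ˢ Set.Iio N) := by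
    rintro ⟨x, y⟩ ⟨⟨hxQ : x ∈ Q, hx : x ∈ R⟩, hyQ : y ∈ Q, hy : y ∉ R⟩
    obtain ⟨i, b, hb, hbxy, hby, hbx⟩ := exists_mem_extBoundary_uIcc hx hy
    let w : Pt d := fun j => if j < i then x j else y j
    have hwQ : w ∈ Q := by
      constructor <;> intro j <;> simp only [w] <;> split_ifs
      exacts [hxQ.1 j, hyQ.1 j, hxQ.2 j, hyQ.2 j]
    have hax : a i ≤ x i := hxQ.1 i
    have hk : (x i - a i).toNat < N := by
      have : x i ≤ c i := hxQ.2 i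
      have := hN i
      omega
    refine ⟨(b, i, w, (x i - a i).toNat),
      ⟨⟨Set.uIcc_subset_Icc hxQ hyQ hbxy, hb⟩, trivial, hwQ, hk⟩, ?_⟩
    have hxi : a i + ((x i - a i).toNat : ℤ) = x i := by omega
    ext j
    · rcases lt_trichotomy j i with hj | rfl | hj
      · simp [decode, w, hj]
      · simpa [decode] using hxi
      · simp [decode, hj.ne', not_lt.2 hj.le, hbx j hj]
    · by_cases hj : j < i
      · simp [decode, hj, hby j hj]
      · simp [decode, w, hj]
  calc (Q ∩ R).ncard * (Q ∩ Rᶜ).ncard = ((Q ∩ R) ×ˢ (Q ∩ Rᶜ)).ncard := Set.ncard_prod.symm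
    _ ≤ (decode '' _).ncard := Set.ncard_le_ncard hcover (Set.toFinite _)
    _ ≤ _ := Set.ncard_image_le (Set.toFinite _)
    _ = (Q ∩ extBoundary R).ncard * (d * (Q.ncard * N)) := by simp [Set.ncard_prod]
    _ ≤ (Q ∩ extBoundary R).ncard * (d * (N ^ d * N)) := by gcongr; exact ncard_Icc_le_pow hN
    _ = d * N ^ (d + 1) * (Q ∩ extBoundary R).ncard := by ring

def cubeIndex (ℓ : ℕ) (t : Pt d) : Pt d := fun i => t i / 2 ^ ℓ

theorem mem_cube_iff {ℓ : ℕ} {s t : Pt d} : t ∈ cube ℓ s ↔ cubeIndex ℓ t = s := by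
  simp only [cube, Set.mem_ofPred_eq, funext_iff, cubeIndex,
    Int.ediv_eq_iff_of_pos (by positivity : (0 : ℤ) < 2 ^ ℓ)]
  exact forall_congr' fun i => by constructor <;> rintro ⟨h₁, h₂⟩ <;> constructor <;> linarith

theorem cube_eq_preimage (ℓ : ℕ) (s : Pt d) : cube ℓ s = cubeIndex ℓ ⁻¹' {s} :=
  Set.ext fun _ => mem_cube_iff

theorem preimage_cubeIndex_Icc (ℓ : ℕ) (u v : Pt d) :
    cubeIndex ℓ ⁻¹' Set.Icc u v =
      Set.Icc (fun i => 2 ^ ℓ * u i) (fun i => 2 ^ ℓ * v i + (2 ^ ℓ - 1)) := by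
  have hL : (0 : ℤ) < 2 ^ ℓ := by positivity
  ext t
  simp only [Set.mem_preimage, Set.mem_Icc, Pi.le_def, cubeIndex, Int.le_ediv_iff_mul_le hL,
    Int.ediv_le_iff_le_mul hL, ← forall_and]
  exact forall_congr' fun i => by constructor <;> rintro ⟨h₁, h₂⟩ <;> constructor <;> linarith

theorem cube_eq_Icc (ℓ : ℕ) (s : Pt d) :
    cube ℓ s = Set.Icc (fun i => 2 ^ ℓ * s i) (fun i => 2 ^ ℓ * s i + (2 ^ ℓ - 1)) := by
  rw [cube_eq_preimage, ← Set.Icc_self, preimage_cubeIndex_Icc]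

theorem cube_finite (ℓ : ℕ) (s : Pt d) : (cube ℓ s).Finite := by
  rw [cube_eq_Icc]
  exact Set.finite_Icc _ _

theorem toNat_add_two_pow_sub_one_add_one_sub (ℓ : ℕ) (z : ℤ) :
    (z + (2 ^ ℓ - 1) + 1 - z).toNat = 2 ^ ℓ := by
  rw [show z + (2 ^ ℓ - 1) + 1 - z = 2 ^ ℓ by ring, Int.toNat_pow_of_nonneg zero_le_two]
  rfl

theorem ncard_cube (ℓ : ℕ) (s : Pt d) : (cube ℓ s).ncard = 2 ^ (ℓ * d) := by
  simp [cube_eq_Icc, ncard_Icc_eq_prod, toNat_add_two_pow_sub_one_add_one_sub, pow_mul]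

theorem cubeIndex_succ (ℓ : ℕ) (t : Pt d) : cubeIndex (ℓ + 1) t = cubeIndex 1 (cubeIndex ℓ t) :=
  funext fun i => by
    simp [cubeIndex, Int.ediv_ediv_of_nonneg (by positivity : (0 : ℤ) ≤ 2 ^ ℓ), pow_succ]

def cubeNbhd (ℓ : ℕ) (s : Pt d) : Set (Pt d) := cubeIndex ℓ ⁻¹' Set.Icc (s - 1) (s + 1)

theorem mem_cubeNbhd_iff {ℓ : ℕ} {s t : Pt d} :
    t ∈ cubeNbhd ℓ s ↔ s ∈ Set.Icc (cubeIndex ℓ t - 1) (cubeIndex ℓ t + 1) := by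
  simp only [cubeNbhd, Set.mem_preimage, Set.mem_Icc, Pi.le_def, Pi.sub_apply, Pi.add_apply,
    Pi.one_apply]
  constructor <;> rintro ⟨h₁, h₂⟩ <;>
    exact ⟨fun i => by linarith [h₁ i, h₂ i], fun i => by linarith [h₁ i, h₂ i]⟩

theorem cubeNbhd_eq_Icc (ℓ : ℕ) (s : Pt d) :
    cubeNbhd ℓ s =
      Set.Icc (fun i => 2 ^ ℓ * (s i - 1)) (fun i => 2 ^ ℓ * (s i + 1) + (2 ^ ℓ - 1)) :=
  preimage_cubeIndex_Icc ℓ _ _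

theorem cube_subset_cubeNbhd {ℓ : ℕ} {s u : Pt d} (hu : u ∈ Set.Icc (s - 1) (s + 1)) :
    cube ℓ u ⊆ cubeNbhd ℓ s := by
  rw [cube_eq_preimage]
  exact Set.preimage_mono (Set.singleton_subset_iff.2 hu)

theorem cube_succ_subset_cubeNbhd (ℓ : ℕ) (s : Pt d) :
    cube (ℓ + 1) (cubeIndex 1 s) ⊆ cubeNbhd ℓ s := by
  intro t ht
  rw [mem_cube_iff, cubeIndex_succ, funext_iff] at ht
  refine ⟨fun i => ?_, fun i => ?_⟩ <;> have := ht i <;>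
    simp only [cubeIndex, pow_one, Pi.sub_apply, Pi.add_apply, Pi.one_apply] at this ⊢ <;> omega

theorem two_pow_mul_ncard_slice_le (ℓ : ℕ) (s : Pt d) (i : Fin d) (c : ℤ) :
    2 ^ ℓ * {t ∈ cube ℓ s | t i = c}.ncard ≤ 2 ^ (ℓ * d) := by
  set a : Pt d := fun j => 2 ^ ℓ * s j
  set b : Pt d := fun j => 2 ^ ℓ * s j + (2 ^ ℓ - 1)
  have hsub : {t ∈ cube ℓ s | t i = c} ⊆ Set.Icc (update a i c) (update b i c) := by
    rintro t ⟨ht, rfl⟩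
    rw [cube_eq_Icc] at ht
    constructor <;> intro j <;> rcases eq_or_ne j i with rfl | hj
    · simp
    · simpa [hj] using ht.1 j
    · simp
    · simpa [hj] using ht.2 j
  have hside (j : Fin d) : (update b i c j + 1 - update a i c j).toNat =
      update (fun _ => 2 ^ ℓ) i 1 j := by
    rcases eq_or_ne j i with rfl | hj
    · simp
    · simp [hj, a, b, toNat_add_two_pow_sub_one_add_one_sub]
  calc 2 ^ ℓ * {t ∈ cube ℓ s | t i = c}.ncard
      ≤ 2 ^ ℓ * (Set.Icc (update a i c) (update b i c)).ncard :=
        Nat.mul_le_mul_left _ (Set.ncard_le_ncard hsub (Set.finite_Icc _ _))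
    _ = 2 ^ ℓ * ∏ j, update (fun _ => 2 ^ ℓ) i 1 j := by simp only [ncard_Icc_eq_prod, hside]
    _ = 2 ^ (ℓ * d) := by
      rw [Finset.prod_update_of_mem (Finset.mem_univ i), one_mul,
        Finset.sdiff_singleton_eq_erase,
        Finset.mul_prod_erase _ (fun _ => 2 ^ ℓ) (Finset.mem_univ i)]
      simp [pow_mul]

def layer (ℓ : ℕ) (s : Pt d) : Set (Pt d) :=
  {t ∈ cube ℓ s | ∃ i, t i = 2 ^ ℓ * s i ∨ t i = 2 ^ ℓ * s i + (2 ^ ℓ - 1)}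

theorem two_pow_mul_ncard_layer_le (ℓ : ℕ) (s : Pt d) :
    2 ^ ℓ * (layer ℓ s).ncard ≤ 2 * d * 2 ^ (ℓ * d) := by
  let slice (i : Fin d) (c : ℤ) : Set (Pt d) := {t ∈ cube ℓ s | t i = c}
  have hsub : layer ℓ s ⊆
      ⋃ i ∈ Finset.univ, slice i (2 ^ ℓ * s i) ∪ slice i (2 ^ ℓ * s i + (2 ^ ℓ - 1)) := by
    rintro t ⟨ht, i, hi | hi⟩
    exacts [Set.mem_biUnion (Finset.mem_univ i) (Or.inl ⟨ht, hi⟩),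
      Set.mem_biUnion (Finset.mem_univ i) (Or.inr ⟨ht, hi⟩)]
  have hfin :
      (⋃ i ∈ Finset.univ, slice i (2 ^ ℓ * s i) ∪ slice i (2 ^ ℓ * s i + (2 ^ ℓ - 1))).Finite :=
    (cube_finite ℓ s).subset <|
      Set.iUnion₂_subset fun _ _ => Set.union_subset (fun _ ht => ht.1) (fun _ ht => ht.1)
  calc 2 ^ ℓ * (layer ℓ s).ncard
      ≤ 2 ^ ℓ * ∑ i, (slice i (2 ^ ℓ * s i) ∪ slice i (2 ^ ℓ * s i + (2 ^ ℓ - 1))).ncard := by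
        gcongr
        exact (Set.ncard_le_ncard hsub hfin).trans (Finset.set_ncard_biUnion_le _ _)
    _ ≤ ∑ i : Fin d, (2 ^ ℓ * (slice i (2 ^ ℓ * s i)).ncard +
          2 ^ ℓ * (slice i (2 ^ ℓ * s i + (2 ^ ℓ - 1))).ncard) := by
        rw [Finset.mul_sum]
        gcongr
        rw [← mul_add]
        gcongr
        exact Set.ncard_union_le _ _
    _ ≤ ∑ _i : Fin d, (2 ^ (ℓ * d) + 2 ^ (ℓ * d)) := by
        gcongr <;> exact two_pow_mul_ncard_slice_le ℓ s _ _
    _ = 2 * d * 2 ^ (ℓ * d) := by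
        rw [Finset.sum_const, Finset.card_univ, Fintype.card_fin, smul_eq_mul]
        ring

def IsFull (ℓ : ℕ) (R : Set (Pt d)) (s : Pt d) : Prop :=
  2 ^ (ℓ * d) ≤ 2 * (cube ℓ s ∩ R).ncard

theorem mem_coarse_iff {ℓ : ℕ} {R : Set (Pt d)} {t : Pt d} :
    t ∈ coarse ℓ R ↔ IsFull ℓ R (cubeIndex ℓ t) := by
  simp [coarse, mem_cube_iff, IsFull]

theorem isFull_compl_of_not_isFull {ℓ : ℕ} {R : Set (Pt d)} {s : Pt d} (h : ¬IsFull ℓ R s) :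
    IsFull ℓ Rᶜ s := by
  have := Set.ncard_inter_add_ncard_sdiff_eq_ncard (cube ℓ s) R (cube_finite ℓ s)
  rw [ncard_cube, Set.sdiff_eq] at this
  unfold IsFull at h ⊢
  omega

theorem cubeNbhd_finite (ℓ : ℕ) (s : Pt d) : (cubeNbhd ℓ s).Finite := by
  rw [cubeNbhd_eq_Icc]
  exact Set.finite_Icc _ _

theorem IsFull.two_pow_le_ncard_cubeNbhd_inter {ℓ ℓ' : ℕ} {A : Set (Pt d)} {u s : Pt d}
    (h : IsFull ℓ' A u) (hℓ : ℓ ≤ ℓ') (hu : cube ℓ' u ⊆ cubeNbhd ℓ s) :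
    2 ^ (ℓ * d) ≤ 2 * (cubeNbhd ℓ s ∩ A).ncard :=
  calc 2 ^ (ℓ * d) ≤ 2 ^ (ℓ' * d) := Nat.pow_le_pow_right two_pos (Nat.mul_le_mul_right d hℓ)
    _ ≤ 2 * (cube ℓ' u ∩ A).ncard := h
    _ ≤ 2 * (cubeNbhd ℓ s ∩ A).ncard := Nat.mul_le_mul_left 2 <|
      Set.ncard_le_ncard (Set.inter_subset_inter_left A hu)
        ((cubeNbhd_finite ℓ s).inter_of_left A)

def mixedCells (ℓ : ℕ) (R : Set (Pt d)) : Set (Pt d) :=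
  {s | 2 ^ (ℓ * d) ≤ 2 * (cubeNbhd ℓ s ∩ R).ncard ∧
    2 ^ (ℓ * d) ≤ 2 * (cubeNbhd ℓ s ∩ Rᶜ).ncard}

theorem self_mem_Icc_sub_one_add_one (s : Pt d) : s ∈ Set.Icc (s - 1) (s + 1) :=
  ⟨sub_le_self _ zero_le_one, le_add_of_nonneg_right zero_le_one⟩

theorem mem_mixedCells_of_isFull_of_not_isFull {ℓ : ℕ} {R : Set (Pt d)} {s u : Pt d}
    (hu : IsFull ℓ R u) (hs : ¬IsFull ℓ R s) (hus : u ∈ Set.Icc (s - 1) (s + 1)) :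
    s ∈ mixedCells ℓ R :=
  ⟨hu.two_pow_le_ncard_cubeNbhd_inter le_rfl (cube_subset_cubeNbhd hus),
    (isFull_compl_of_not_isFull hs).two_pow_le_ncard_cubeNbhd_inter le_rfl
      (cube_subset_cubeNbhd (self_mem_Icc_sub_one_add_one s))⟩

theorem mem_mixedCells_of_not_isFull_iff {ℓ : ℕ} {R : Set (Pt d)} {s : Pt d}
    (h : ¬(IsFull ℓ R s ↔ IsFull (ℓ + 1) R (cubeIndex 1 s))) : s ∈ mixedCells ℓ R := by
  have hs := cube_subset_cubeNbhd (ℓ := ℓ) (self_mem_Icc_sub_one_add_one s)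
  have hq := cube_succ_subset_cubeNbhd ℓ s
  by_cases hfull : IsFull ℓ R s
  · have hq' : ¬IsFull (ℓ + 1) R (cubeIndex 1 s) := fun hq' => h (iff_of_true hfull hq')
    exact ⟨hfull.two_pow_le_ncard_cubeNbhd_inter le_rfl hs,
      (isFull_compl_of_not_isFull hq').two_pow_le_ncard_cubeNbhd_inter ℓ.le_succ hq⟩
  · have hq' : IsFull (ℓ + 1) R (cubeIndex 1 s) := by_contra fun hq' => h (iff_of_false hfull hq')
    exact ⟨hq'.two_pow_le_ncard_cubeNbhd_inter ℓ.le_succ hq,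
      (isFull_compl_of_not_isFull hfull).two_pow_le_ncard_cubeNbhd_inter le_rfl hs⟩

theorem mixedCells_finite {R : Set (Pt d)} (hR : R.Finite) (ℓ : ℕ) : (mixedCells ℓ R).Finite := by
  refine (hR.biUnion fun t _ => Set.finite_Icc (cubeIndex ℓ t - 1) (cubeIndex ℓ t + 1)).subset
    fun s hs => ?_
  obtain ⟨t, htN, htR⟩ : (cubeNbhd ℓ s ∩ R).Nonempty := by
    refine Set.nonempty_of_ncard_ne_zero fun h0 => ?_
    have := hs.1
    rw [h0] at this
    exact (Nat.two_pow_pos _).ne' (Nat.le_zero.1 this)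
  exact Set.mem_biUnion htR (mem_cubeNbhd_iff.1 htN)

theorem two_pow_le_ncard_cubeNbhd_inter_extBoundary {ℓ : ℕ} {R : Set (Pt d)} {s : Pt d}
    (hs : s ∈ mixedCells ℓ R) :
    2 ^ (ℓ * d) ≤ 4 * d * 3 ^ (d + 1) * 2 ^ ℓ * (cubeNbhd ℓ s ∩ extBoundary R).ncard := by
  have hbox := ncard_inter_mul_ncard_inter_compl_le R (N := 3 * 2 ^ ℓ)
    (a := fun i => 2 ^ ℓ * (s i - 1)) (c := fun i => 2 ^ ℓ * (s i + 1) + (2 ^ ℓ - 1))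
    fun i => by push_cast; linarith
  rw [← cubeNbhd_eq_Icc] at hbox
  refine Nat.le_of_mul_le_mul_right ?_ (Nat.two_pow_pos (ℓ * d))
  calc 2 ^ (ℓ * d) * 2 ^ (ℓ * d)
      ≤ (2 * (cubeNbhd ℓ s ∩ R).ncard) * (2 * (cubeNbhd ℓ s ∩ Rᶜ).ncard) :=
        Nat.mul_le_mul hs.1 hs.2
    _ = 4 * ((cubeNbhd ℓ s ∩ R).ncard * (cubeNbhd ℓ s ∩ Rᶜ).ncard) := by ring
    _ ≤ 4 * (d * (3 * 2 ^ ℓ) ^ (d + 1) * (cubeNbhd ℓ s ∩ extBoundary R).ncard) := by gcongr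
    _ = _ := by ring

theorem ncard_mixedCells_mul_le {R : Set (Pt d)} (hR : R.Finite) (ℓ : ℕ) :
    (mixedCells ℓ R).ncard * 2 ^ (ℓ * d) ≤
      4 * d * 3 ^ (2 * d + 1) * 2 ^ ℓ * (extBoundary R).ncard := by
  classical
  set S := (mixedCells_finite hR ℓ).toFinset
  have hmult (p : Pt d) : (S.filter fun s => p ∈ cubeNbhd ℓ s).card ≤ 3 ^ d := by
    calc (S.filter fun s => p ∈ cubeNbhd ℓ s).card
        ≤ (Finset.Icc (cubeIndex ℓ p - 1) (cubeIndex ℓ p + 1)).card :=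
          Finset.card_le_card fun s hs => by
            simpa using mem_cubeNbhd_iff.1 (Finset.mem_filter.1 hs).2
      _ = 3 ^ d := by
          simp [Pi.card_Icc, show ∀ x : ℤ, x + 1 + 1 - (x - 1) = 3 by intro; ring]
  calc (mixedCells ℓ R).ncard * 2 ^ (ℓ * d) = ∑ _s ∈ S, 2 ^ (ℓ * d) := by
        simp [Set.ncard_eq_toFinset_card _ (mixedCells_finite hR ℓ), S]
    _ ≤ ∑ s ∈ S, 4 * d * 3 ^ (d + 1) * 2 ^ ℓ * (cubeNbhd ℓ s ∩ extBoundary R).ncard :=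
        Finset.sum_le_sum fun s hs =>
          two_pow_le_ncard_cubeNbhd_inter_extBoundary ((Set.Finite.mem_toFinset _).1 hs)
    _ ≤ 4 * d * 3 ^ (d + 1) * 2 ^ ℓ * (3 ^ d * (extBoundary R).ncard) := by
        rw [← Finset.mul_sum]
        gcongr
        exact sum_ncard_inter_le_mul_ncard (extBoundary_finite hR) S _ fun p _ => hmult p
    _ = _ := by ring

theorem extBoundary_coarse_subset (ℓ : ℕ) (R : Set (Pt d)) :
    extBoundary (coarse ℓ R) ⊆ ⋃ s ∈ mixedCells ℓ R, layer ℓ s := by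
  rintro t ⟨ht, u, hu, htu⟩
  rw [mem_coarse_iff] at ht hu
  have hL : (0 : ℤ) < 2 ^ ℓ := by positivity
  have hclose : cubeIndex ℓ u ∈ Set.Icc (cubeIndex ℓ t - 1) (cubeIndex ℓ t + 1) := by
    refine ⟨fun i => ?_, fun i => ?_⟩ <;>
    · have := abs_le.1 (Int.abs_ediv_sub_ediv_le_one hL (htu.2 i))
      simp only [cubeIndex, Pi.sub_apply, Pi.add_apply, Pi.one_apply]
      linarith
  obtain ⟨i, hi⟩ := Function.ne_iff.1 fun h : cubeIndex ℓ t = cubeIndex ℓ u => ht (by rwa [h])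
  exact Set.mem_biUnion (mem_mixedCells_of_isFull_of_not_isFull hu ht hclose)
    ⟨mem_cube_iff.2 rfl, i,
      Int.eq_mul_ediv_or_eq_mul_ediv_add_sub_one_of_ediv_ne hL (htu.2 i) hi⟩

theorem ncard_extBoundary_coarse_le {R : Set (Pt d)} (hR : R.Finite) (ℓ : ℕ) :
    (extBoundary (coarse ℓ R)).ncard ≤
      2 * d * (4 * d * 3 ^ (2 * d + 1)) * (extBoundary R).ncard := by
  set S := (mixedCells_finite hR ℓ).toFinset
  have hcover : extBoundary (coarse ℓ R) ⊆ ⋃ s ∈ S, layer ℓ s := by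
    simpa [S] using extBoundary_coarse_subset ℓ R
  have hfin : (⋃ s ∈ S, layer ℓ s).Finite :=
    S.finite_toSet.biUnion fun s _ => (cube_finite ℓ s).subset fun _ ht => ht.1
  refine Nat.le_of_mul_le_mul_left ?_ (Nat.two_pow_pos ℓ)
  calc 2 ^ ℓ * (extBoundary (coarse ℓ R)).ncard
      ≤ 2 ^ ℓ * ∑ s ∈ S, (layer ℓ s).ncard :=
        Nat.mul_le_mul_left _ ((Set.ncard_le_ncard hcover hfin).trans (S.set_ncard_biUnion_le _))
    _ ≤ ∑ _s ∈ S, 2 * d * 2 ^ (ℓ * d) := by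
        rw [Finset.mul_sum]
        exact Finset.sum_le_sum fun s _ => two_pow_mul_ncard_layer_le ℓ s
    _ = 2 * d * ((mixedCells ℓ R).ncard * 2 ^ (ℓ * d)) := by
        rw [Finset.sum_const, smul_eq_mul, Set.ncard_eq_toFinset_card _ (mixedCells_finite hR ℓ)]
        ring
    _ ≤ 2 * d * (4 * d * 3 ^ (2 * d + 1) * 2 ^ ℓ * (extBoundary R).ncard) :=
        Nat.mul_le_mul_left _ (ncard_mixedCells_mul_le hR ℓ)
    _ = _ := by ring

theorem symmDiff_coarse_succ_subset (ℓ : ℕ) (R : Set (Pt d)) :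
    symmDiff (coarse ℓ R) (coarse (ℓ + 1) R) ⊆ cubeIndex ℓ ⁻¹' mixedCells ℓ R := by
  intro t ht
  rw [Set.mem_symmDiff, mem_coarse_iff, mem_coarse_iff, cubeIndex_succ] at ht
  show cubeIndex ℓ t ∈ mixedCells ℓ R
  exact mem_mixedCells_of_not_isFull_iff fun h =>
    ht.elim (fun h' => h'.2 (h.1 h'.1)) (fun h' => h'.2 (h.2 h'.1))

theorem ncard_preimage_cubeIndex_le {S : Set (Pt d)} (hS : S.Finite) (ℓ : ℕ) :
    (cubeIndex ℓ ⁻¹' S).ncard ≤ S.ncard * 2 ^ (ℓ * d) := by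
  have hcover : cubeIndex ℓ ⁻¹' S ⊆ ⋃ s ∈ hS.toFinset, cube ℓ s := fun t ht =>
    Set.mem_biUnion (hS.mem_toFinset.2 ht) (mem_cube_iff.2 rfl)
  calc (cubeIndex ℓ ⁻¹' S).ncard ≤ ∑ s ∈ hS.toFinset, (cube ℓ s).ncard :=
        (Set.ncard_le_ncard hcover
          (hS.toFinset.finite_toSet.biUnion fun s _ => cube_finite ℓ s)).trans
            (hS.toFinset.set_ncard_biUnion_le _)
    _ = S.ncard * 2 ^ (ℓ * d) := by simp [ncard_cube, Set.ncard_eq_toFinset_card _ hS]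

theorem ncard_symmDiff_coarse_succ_le {R : Set (Pt d)} (hR : R.Finite) (ℓ : ℕ) :
    (symmDiff (coarse ℓ R) (coarse (ℓ + 1) R)).ncard ≤
      4 * d * 3 ^ (2 * d + 1) * 2 ^ ℓ * (extBoundary R).ncard := by
  have hfin : (cubeIndex ℓ ⁻¹' mixedCells ℓ R).Finite :=
    (mixedCells_finite hR ℓ).preimage' fun s _ => cube_eq_preimage ℓ s ▸ cube_finite ℓ s
  exact (Set.ncard_le_ncard (symmDiff_coarse_succ_subset ℓ R) hfin).trans <|
    (ncard_preimage_cubeIndex_le (mixedCells_finite hR ℓ) ℓ).trans (ncard_mixedCells_mul_le hR ℓ)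

theorem coarse_graining_bounds_general (d : ℕ) :
    ∃ b₁ b₂ : ℕ, 0 < b₁ ∧ 0 < b₂ ∧
      ∀ (R : Set (Pt d)), R.Finite → ∀ ℓ : ℕ,
        (extBoundary (coarse ℓ R)).ncard ≤ b₁ * (extBoundary R).ncard ∧
        (symmDiff (coarse ℓ R) (coarse (ℓ + 1) R)).ncard
          ≤ b₂ * 2 ^ ℓ * (extBoundary R).ncard := by
  refine ⟨2 * d * (4 * d * 3 ^ (2 * d + 1)) + 1, 4 * d * 3 ^ (2 * d + 1) + 1, Nat.succ_pos _,
    Nat.succ_pos _, fun R hR ℓ => ⟨?_, ?_⟩⟩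
  · exact (ncard_extBoundary_coarse_le hR ℓ).trans (by gcongr; exact Nat.le_succ _)
  · exact (ncard_symmDiff_coarse_succ_le hR ℓ).trans (by gcongr; exact Nat.le_succ _)

/-- there exist constants `b₁(d), b₂(d)` such that for every finite
`R ⊆ ℤ^d` and every `ℓ ≥ 0`, `|∂B_ℓ(R)| ≤ b₁ |∂R|` and
`|B_ℓ(R) Δ B_{ℓ+1}(R)| ≤ b₂ 2^ℓ |∂R|`. -/
theorem coarse_graining_bounds (d : ℕ) (hd : 1 ≤ d) :
    ∃ b₁ b₂ : ℕ, 0 < b₁ ∧ 0 < b₂ ∧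
      ∀ (R : Set (Pt d)), R.Finite → ∀ ℓ : ℕ,
        (extBoundary (coarse ℓ R)).ncard ≤ b₁ * (extBoundary R).ncard ∧
        (symmDiff (coarse ℓ R) (coarse (ℓ + 1) R)).ncard
          ≤ b₂ * 2 ^ ℓ * (extBoundary R).ncard :=
  coarse_graining_bounds_general d
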